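/- Let A = (Q, Σ, ·, i, F) be a minimal DFA. The language L(A) is 1-piecewise testable if and only if both of the following hold: (1) for every state p ∈ Q and letter a ∈ Σ, if p·a = q then q·a = q; and (2) for every state p ∈ Q and letters a, b ∈ Σ, p·ab = p·ba. -/
import Mathlib


/-- `subk k w` is the set of scattered subwords of `w` of length at most `k`. -/
def subk {α : Type*} (k : ℕ) (w : List α) : Set (List α) :=
  {u | u.length ≤ k ∧ u.Sublist w}

/-- Two words are `k`-equivalent if they have the same subwords of length at most `k`. -/
def kEquiv {α : Type*} (k : ℕ) (u v : List α) : Prop :=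
  subk k u = subk k v

/-- A language is `k`-piecewise testable (Simon's characterization):
`k`-equivalent words are equi-members. -/
def IsPT {α : Type*} (k : ℕ) (L : Language α) : Prop :=
  ∀ u v : List α, kEquiv k u v → (u ∈ L ↔ v ∈ L)

/-- A DFA is minimal if all states are reachable and pairwise distinguishable. -/
def IsMinimalDFA {α σ : Type*} (A : DFA α σ) : Prop :=
  (∀ q : σ, ∃ w : List α, A.eval w = q) ∧
  ∀ p q : σ,
    (∀ w : List α, (A.evalFrom p w ∈ A.accept ↔ A.evalFrom q w ∈ A.accept)) → p = q

/-- There is a simple path (pairwise distinct states) with `m` transitions in the DFA `A`. -/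
def DFAHasSimplePath {α σ : Type*} (A : DFA α σ) (m : ℕ) : Prop :=
  ∃ (qs : Fin (m + 1) → σ) (as : Fin m → α),
    Function.Injective qs ∧ ∀ i : Fin m, A.step (qs i.castSucc) (as i) = qs i.succ

/-- The depth of a DFA: the number of transitions on a longest simple path. -/
noncomputable def dfaDepth {α σ : Type*} (A : DFA α σ) : ℕ :=
  sSup {m | DFAHasSimplePath A m}

/-- There is a simple path (pairwise distinct states) with `m` transitions in the NFA `A`. -/
def NFAHasSimplePath {α σ : Type*} (A : NFA α σ) (m : ℕ) : Prop :=
  ∃ (qs : Fin (m + 1) → σ) (as : Fin m → α),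
    Function.Injective qs ∧ ∀ i : Fin m, qs i.succ ∈ A.step (qs i.castSucc) (as i)

/-- The depth of an NFA: the number of transitions on a longest simple path. -/
noncomputable def nfaDepth {α σ : Type*} (A : NFA α σ) : ℕ :=
  sSup {m | NFAHasSimplePath A m}


section Aux
variable {α σ : Type*} (A : DFA α σ)

lemma kEquiv_one_iff (u v : List α) :
    kEquiv 1 u v ↔ ∀ a, a ∈ u ↔ a ∈ v := by
  constructor
  · intro h a
    have h1 : [a] ∈ subk 1 u ↔ [a] ∈ subk 1 v := by rw [h]
    simpa [subk, List.singleton_sublist] using h1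
  · intro h
    ext x
    have key : ∀ w w' : List α, (∀ a, a ∈ w ↔ a ∈ w') →
        x.length ≤ 1 ∧ x.Sublist w → x.length ≤ 1 ∧ x.Sublist w' := by
      intro w w' hm ⟨hl, hs⟩
      refine ⟨hl, ?_⟩
      match x, hl with
      | [], _ => exact List.nil_sublist _
      | [a], _ =>
        rw [List.singleton_sublist] at hs ⊢
        exact (hm a).1 hs
    exact ⟨key u v h, key v u (fun a => (h a).symm)⟩

variable (hidem : ∀ (p : σ) (a : α), A.step (A.step p a) a = A.step p a)
  (hcomm : ∀ (p : σ) (a b : α), A.step (A.step p a) b = A.step (A.step p b) a)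

include hcomm in
lemma comm_eval : ∀ (w : List α) (p : σ) (a : α),
    A.evalFrom (A.step p a) w = A.step (A.evalFrom p w) a := by
  intro w
  induction w with
  | nil => intro p a; simp [DFA.evalFrom]
  | cons b t ih =>
    intro p a
    show A.evalFrom (A.step (A.step p a) b) t = A.step (A.evalFrom (A.step p b) t) a
    rw [hcomm, ih]

include hidem hcomm in
lemma step_absorb : ∀ (w : List α) (p : σ) (a : α), a ∈ w →
    A.step (A.evalFrom p w) a = A.evalFrom p w := by
  intro w p a haw
  obtain ⟨x, y, rfl⟩ := List.append_of_mem haw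
  rw [DFA.evalFrom_of_append]
  show A.step (A.evalFrom (A.step (A.evalFrom p x) a) y) a
      = A.evalFrom (A.step (A.evalFrom p x) a) y
  rw [comm_eval A hcomm]
  exact hidem _ a

include hidem hcomm in
lemma eval_absorb : ∀ (w : List α) (p : σ) (a : α), a ∈ w →
    A.evalFrom (A.step p a) w = A.evalFrom p w := by
  intro w p a haw
  rw [comm_eval A hcomm, step_absorb A hidem hcomm w p a haw]

include hcomm in
lemma eval_perm {u v : List α} (h : u.Perm v) : ∀ p : σ,
    A.evalFrom p u = A.evalFrom p v := by
  induction h with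
  | nil => intro p; rfl
  | cons a _ ih => intro p; exact ih (A.step p a)
  | swap a b t =>
    intro p
    show A.evalFrom (A.step (A.step p b) a) t = A.evalFrom (A.step (A.step p a) b) t
    rw [hcomm]
  | trans _ _ ih1 ih2 => intro p; rw [ih1, ih2]

include hidem hcomm in
lemma eval_of_same_mem {u v : List α} (h : ∀ a, a ∈ u ↔ a ∈ v) :
    ∀ p : σ, A.evalFrom p u = A.evalFrom p v := by
  classical
  have dedup : ∀ (w : List α) (p : σ), A.evalFrom p w = A.evalFrom p w.dedup := by
    intro w
    induction w with
    | nil => intro p; rfl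
    | cons a t ih =>
      intro p
      by_cases ha : a ∈ t
      · rw [List.dedup_cons_of_mem ha]
        show A.evalFrom (A.step p a) t = _
        rw [eval_absorb A hidem hcomm t p a ha, ih]
      · rw [List.dedup_cons_of_notMem ha]
        show A.evalFrom (A.step p a) t = A.evalFrom (A.step p a) t.dedup
        exact ih _
  intro p
  have hperm : u.dedup.Perm v.dedup := by
    apply List.perm_of_nodup_nodup_toFinset_eq u.nodup_dedup v.nodup_dedup
    ext a
    simp [List.mem_toFinset, List.mem_dedup, h a]
  rw [dedup u p, dedup v p, eval_perm A hcomm hperm p]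

end Aux

/-- Characterization of 1-piecewise testability on the minimal DFA. -/
theorem stmt2 {α σ : Type*} [Fintype α] [Fintype σ] (A : DFA α σ)
    (hmin : IsMinimalDFA A) :
    IsPT 1 A.accepts ↔
      ((∀ (p : σ) (a : α), A.step (A.step p a) a = A.step p a) ∧
       (∀ (p : σ) (a b : α), A.step (A.step p a) b = A.step (A.step p b) a)) := by
  constructor
  · intro hPT
    classical
    constructor
    · intro p a
      obtain ⟨w, hw⟩ := hmin.1 p
      apply hmin.2
      intro z
      have h1 : A.evalFrom (A.step (A.step p a) a) z = A.eval (w ++ ([a, a] ++ z)) := by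
        have hw' : A.evalFrom A.start w = p := hw
        show _ = A.evalFrom A.start (w ++ ([a, a] ++ z))
        rw [DFA.evalFrom_of_append, hw']
        rfl
      have h2 : A.evalFrom (A.step p a) z = A.eval (w ++ ([a] ++ z)) := by
        have hw' : A.evalFrom A.start w = p := hw
        show _ = A.evalFrom A.start (w ++ ([a] ++ z))
        rw [DFA.evalFrom_of_append, hw']
        rfl
      have hk : kEquiv 1 (w ++ ([a, a] ++ z)) (w ++ ([a] ++ z)) := by
        rw [kEquiv_one_iff]
        intro b
        simp only [List.mem_append, List.mem_cons, List.not_mem_nil]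
        tauto
      have := hPT _ _ hk
      rw [DFA.mem_accepts, DFA.mem_accepts] at this
      rw [h1, h2]
      exact this
    · intro p a b
      obtain ⟨w, hw⟩ := hmin.1 p
      apply hmin.2
      intro z
      have h1 : A.evalFrom (A.step (A.step p a) b) z = A.eval (w ++ ([a, b] ++ z)) := by
        have hw' : A.evalFrom A.start w = p := hw
        show _ = A.evalFrom A.start (w ++ ([a, b] ++ z))
        rw [DFA.evalFrom_of_append, hw']
        rfl
      have h2 : A.evalFrom (A.step (A.step p b) a) z = A.eval (w ++ ([b, a] ++ z)) := by
        have hw' : A.evalFrom A.start w = p := hw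
        show _ = A.evalFrom A.start (w ++ ([b, a] ++ z))
        rw [DFA.evalFrom_of_append, hw']
        rfl
      have hk : kEquiv 1 (w ++ ([a, b] ++ z)) (w ++ ([b, a] ++ z)) := by
        rw [kEquiv_one_iff]
        intro c
        simp only [List.mem_append, List.mem_cons, List.not_mem_nil]
        tauto
      have := hPT _ _ hk
      rw [DFA.mem_accepts, DFA.mem_accepts] at this
      rw [h1, h2]
      exact this
  · rintro ⟨hidem, hcomm⟩ u v hk
    rw [kEquiv_one_iff] at hk
    rw [DFA.mem_accepts, DFA.mem_accepts,
      show A.eval u = A.eval v from eval_of_same_mem A hidem hcomm hk A.start]
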